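/- arXiv:math/9906189 — 7 statements merged into one kernel-verified Lean document; each statement's English description precedes it below -/
import Mathlib

section
/- The dynamical R-matrix of U_s(sl(2)), namely the 4×4 constant matrix R(s) with nonzero entries R[11,11]=R[22,22]=1, R[12,12]=1, R[12,21]=s⁻¹, R[21,12]=−s⁻¹, R[21,21]=1−s⁻², satisfies the (spectral-parameter-independent) dynamical Yang–Baxter equation R₁₂(s+h⁽³⁾) R₁₃(s) R₂₃(s+h⁽¹⁾) = R₂₃(s) R₁₃(s+h⁽²⁾) R₁₂(s). -/
open Matrix

/-- Encoding of a pair of indices of `Fin 2` into `Fin 4`, basis ordering (11,12,21,22).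
The basis vector `0` has weight `+1`, the basis vector `1` has weight `-1`. -/
def enc (a b : Fin 2) : Fin 4 := ⟨2 * a.val + b.val, by have := a.isLt; have := b.isLt; omega⟩

def L12 {K : Type*} [Field K] (M : Matrix (Fin 4) (Fin 4) K) :
    Matrix (Fin 2 × Fin 2 × Fin 2) (Fin 2 × Fin 2 × Fin 2) K :=
  Matrix.of fun p q =>
    M (enc p.1 p.2.1) (enc q.1 q.2.1) * (if p.2.2 = q.2.2 then 1 else 0)

def L23 {K : Type*} [Field K] (M : Matrix (Fin 4) (Fin 4) K) :
    Matrix (Fin 2 × Fin 2 × Fin 2) (Fin 2 × Fin 2 × Fin 2) K :=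
  Matrix.of fun p q =>
    (if p.1 = q.1 then 1 else 0) * M (enc p.2.1 p.2.2) (enc q.2.1 q.2.2)

def L13 {K : Type*} [Field K] (M : Matrix (Fin 4) (Fin 4) K) :
    Matrix (Fin 2 × Fin 2 × Fin 2) (Fin 2 × Fin 2 × Fin 2) K :=
  Matrix.of fun p q =>
    M (enc p.1 p.2.2) (enc q.1 q.2.2) * (if p.2.1 = q.2.1 then 1 else 0)

/-- Dynamical action on legs 1,2: the matrix used depends (via the family `F`)
on the index in the spectator slot 3. -/
def L12d {K : Type*} [Field K] (F : Fin 2 → Matrix (Fin 4) (Fin 4) K) :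
    Matrix (Fin 2 × Fin 2 × Fin 2) (Fin 2 × Fin 2 × Fin 2) K :=
  Matrix.of fun p q =>
    F p.2.2 (enc p.1 p.2.1) (enc q.1 q.2.1) * (if p.2.2 = q.2.2 then 1 else 0)

/-- Dynamical action on legs 2,3: the matrix depends on the index in slot 1. -/
def L23d {K : Type*} [Field K] (F : Fin 2 → Matrix (Fin 4) (Fin 4) K) :
    Matrix (Fin 2 × Fin 2 × Fin 2) (Fin 2 × Fin 2 × Fin 2) K :=
  Matrix.of fun p q =>
    (if p.1 = q.1 then 1 else 0) * F p.1 (enc p.2.1 p.2.2) (enc q.2.1 q.2.2)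

/-- Dynamical action on legs 1,3: the matrix depends on the index in slot 2. -/
def L13d {K : Type*} [Field K] (F : Fin 2 → Matrix (Fin 4) (Fin 4) K) :
    Matrix (Fin 2 × Fin 2 × Fin 2) (Fin 2 × Fin 2 × Fin 2) K :=
  Matrix.of fun p q =>
    F p.2.1 (enc p.1 p.2.2) (enc q.1 q.2.2) * (if p.2.1 = q.2.1 then 1 else 0)


/-- The additive dynamical shift `s → s + ε` according to the weight
`ε = +1` (index 0) or `ε = −1` (index 1). -/
def sha {K : Type*} [Field K] (s : K) : Fin 2 → K :=
  fun ε => if ε = 0 then s + 1 else s - 1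

/-- The (constant) dynamical R-matrix of `U_s(sl(2))`. -/
def RUs {K : Type*} [Field K] (s : K) : Matrix (Fin 4) (Fin 4) K :=
  !![1, 0, 0, 0;
     0, 1, s⁻¹, 0;
     0, -s⁻¹, 1 - s⁻¹ ^ 2, 0;
     0, 0, 0, 1]

@[simp] lemma RUsa_0_0 {K : Type*} [Field K] (s : K) : RUs s 0 0 = 1 := rfl
@[simp] lemma RUsa_0_1 {K : Type*} [Field K] (s : K) : RUs s 0 1 = 0 := rfl
@[simp] lemma RUsa_0_2 {K : Type*} [Field K] (s : K) : RUs s 0 2 = 0 := rfl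
@[simp] lemma RUsa_0_3 {K : Type*} [Field K] (s : K) : RUs s 0 3 = 0 := rfl
@[simp] lemma RUsa_1_0 {K : Type*} [Field K] (s : K) : RUs s 1 0 = 0 := rfl
@[simp] lemma RUsa_1_1 {K : Type*} [Field K] (s : K) : RUs s 1 1 = 1 := rfl
@[simp] lemma RUsa_1_2 {K : Type*} [Field K] (s : K) : RUs s 1 2 = s⁻¹ := rfl
@[simp] lemma RUsa_1_3 {K : Type*} [Field K] (s : K) : RUs s 1 3 = 0 := rfl
@[simp] lemma RUsa_2_0 {K : Type*} [Field K] (s : K) : RUs s 2 0 = 0 := rfl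
@[simp] lemma RUsa_2_1 {K : Type*} [Field K] (s : K) : RUs s 2 1 = -s⁻¹ := rfl
@[simp] lemma RUsa_2_2 {K : Type*} [Field K] (s : K) : RUs s 2 2 = 1 - s⁻¹ ^ 2 := rfl
@[simp] lemma RUsa_2_3 {K : Type*} [Field K] (s : K) : RUs s 2 3 = 0 := rfl
@[simp] lemma RUsa_3_0 {K : Type*} [Field K] (s : K) : RUs s 3 0 = 0 := rfl
@[simp] lemma RUsa_3_1 {K : Type*} [Field K] (s : K) : RUs s 3 1 = 0 := rfl
@[simp] lemma RUsa_3_2 {K : Type*} [Field K] (s : K) : RUs s 3 2 = 0 := rfl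
@[simp] lemma RUsa_3_3 {K : Type*} [Field K] (s : K) : RUs s 3 3 = 1 := rfl
@[simp] lemma enc_0_0 : enc 0 0 = 0 := rfl
@[simp] lemma enc_0_1 : enc 0 1 = 1 := rfl
@[simp] lemma enc_1_0 : enc 1 0 = 2 := rfl
@[simp] lemma enc_1_1 : enc 1 1 = 3 := rfl
@[simp] lemma sha_0 {K : Type*} [Field K] (s : K) : sha s 0 = s + 1 := rfl
@[simp] lemma sha_1 {K : Type*} [Field K] (s : K) : sha s 1 = s - 1 := rfl

set_option maxHeartbeats 8000000 in
/-- The spectral-parameter-independent dynamical Yang–Baxter equation for the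
R-matrix of `U_s(sl(2))`:
`R₁₂(s+h⁽³⁾) R₁₃(s) R₂₃(s+h⁽¹⁾) = R₂₃(s) R₁₃(s+h⁽²⁾) R₁₂(s)`. -/
theorem stmt5 {K : Type*} [Field K] (s : K)
    (hs : s ≠ 0) (hs1 : s + 1 ≠ 0) (hs2 : s - 1 ≠ 0) :
    L12d (fun ε => RUs (sha s ε)) * L13 (RUs s) * L23d (fun ε => RUs (sha s ε)) =
      L23 (RUs s) * L13d (fun ε => RUs (sha s ε)) * L12 (RUs s) := by
  have h1 : s⁻¹ ≠ 0 := inv_ne_zero hs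
  have hA : s + s ^ 2 * 6 + s ^ 3 * 15 + s ^ 4 * 20 + s ^ 5 * 15 + s ^ 6 * 6 + s ^ 7 ≠ 0 := by
    have h : s + s ^ 2 * 6 + s ^ 3 * 15 + s ^ 4 * 20 + s ^ 5 * 15 + s ^ 6 * 6 + s ^ 7
        = s * (s + 1) ^ 6 := by ring
    rw [h]; exact mul_ne_zero hs (pow_ne_zero _ hs1)
  have hB : -s ^ 6 + s ^ 7 ≠ 0 := by
    have h : -s ^ 6 + s ^ 7 = s ^ 6 * (s - 1) := by ring
    rw [h]; exact mul_ne_zero (pow_ne_zero _ hs) hs2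
  ext ⟨a, b, c⟩ ⟨d, e, f⟩
  simp only [L12d, L13d, L23d, L12, L13, L23, Matrix.mul_apply,
    Fintype.sum_prod_type, Fin.sum_univ_two, Matrix.of_apply]
  fin_cases a <;> fin_cases b <;> fin_cases c <;> fin_cases d <;> fin_cases e <;> fin_cases f <;>
    simp only [RUsa_0_0, RUsa_0_1, RUsa_0_2, RUsa_0_3, RUsa_1_0, RUsa_1_1, RUsa_1_2, RUsa_1_3,
      RUsa_2_0, RUsa_2_1, RUsa_2_2, RUsa_2_3, RUsa_3_0, RUsa_3_1, RUsa_3_2, RUsa_3_3,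
      enc_0_0, enc_0_1, enc_1_0, enc_1_1, sha_0, sha_1, Fin.isValue, reduceIte,
      Fin.reduceEq, mul_zero, zero_mul, mul_one, one_mul, add_zero, zero_add, if_true] <;>
    (try norm_num) <;> (try field_simp) <;> (try ring) <;> (try field_simp [hA, hB]) <;> try ring
end

section
/- The vertex and face presentations of the R-matrix of U_q(ŝl(2)) are related by the gauge/twist K⁽⁶⁾: explicitly, with R_V(z) the (unnormalized) symmetric vertex R-matrix having entries R_V[11,11]=R_V[22,22]=1, R_V[12,12]=R_V[21,21]=q(1−z²)/(1−q²z²), R_V[12,21]=R_V[21,12]=z(1−q²)/(1−q²z²), and R_F(z) the face R-matrix with R_F[11,11]=R_F[22,22]=1, R_F[12,12]=R_F[21,21]=q(1−z)/(1−q²z), R_F[12,21]=(1−q²)/(1−q²z), R_F[21,12]=z(1−q²)/(1−q²z), and K⁽⁶⁾(z) = diag(1, z^{−1/2}, z^{1/2}, 1), one has R_F(z²) = K⁽⁶⁾₂₁(z⁻¹) · R_V(z) · K⁽⁶⁾₁₂(z)⁻¹, where K⁽⁶⁾₂₁(z) = P K⁽⁶⁾(z) P. -/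
open Matrix

/-- The flip (permutation) matrix on `V ⊗ V`, basis ordering (11,12,21,22). -/
def P4 {K : Type*} [Field K] : Matrix (Fin 4) (Fin 4) K :=
  !![1, 0, 0, 0;
     0, 0, 1, 0;
     0, 1, 0, 0;
     0, 0, 0, 1]

/-- The unnormalized symmetric vertex R-matrix of `U_q(sl2-hat)`, written in terms of
`u = z^{1/2}` (so `z = u²`). -/
def RV {K : Type*} [Field K] (q u : K) : Matrix (Fin 4) (Fin 4) K :=
  !![1, 0, 0, 0;
     0, q * (1 - u ^ 4) / (1 - q ^ 2 * u ^ 4), u ^ 2 * (1 - q ^ 2) / (1 - q ^ 2 * u ^ 4), 0;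
     0, u ^ 2 * (1 - q ^ 2) / (1 - q ^ 2 * u ^ 4), q * (1 - u ^ 4) / (1 - q ^ 2 * u ^ 4), 0;
     0, 0, 0, 1]

/-- The unnormalized face R-matrix of `U_q(sl2-hat)`. -/
def RF {K : Type*} [Field K] (q z : K) : Matrix (Fin 4) (Fin 4) K :=
  !![1, 0, 0, 0;
     0, q * (1 - z) / (1 - q ^ 2 * z), (1 - q ^ 2) / (1 - q ^ 2 * z), 0;
     0, z * (1 - q ^ 2) / (1 - q ^ 2 * z), q * (1 - z) / (1 - q ^ 2 * z), 0;
     0, 0, 0, 1]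

/-- The gauge/twist `K⁽⁶⁾(z) = diag(1, z^{−1/2}, z^{1/2}, 1)`, written in terms of
`u = z^{1/2}`. -/
def K6 {K : Type*} [Field K] (u : K) : Matrix (Fin 4) (Fin 4) K :=
  !![1, 0, 0, 0;
     0, u⁻¹, 0, 0;
     0, 0, u, 0;
     0, 0, 0, 1]

set_option maxHeartbeats 2000000

/-- The vertex and face presentations of the R-matrix of `U_q(sl2-hat)` are related by
the gauge/twist `K⁽⁶⁾`: `R_F(z²) = K⁽⁶⁾₂₁(z⁻¹) · R_V(z) · K⁽⁶⁾₁₂(z)⁻¹` with `z = u²`,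
`K⁽⁶⁾₂₁(z) = P K⁽⁶⁾(z) P`. -/
theorem stmt6 {K : Type*} [Field K] (q u : K) (hu : u ≠ 0)
    (h : 1 - q ^ 2 * u ^ 4 ≠ 0) :
    RF q (u ^ 2 * u ^ 2) = (P4 * K6 u⁻¹ * P4) * RV q u * (K6 u)⁻¹ := by
  have hinv : (K6 u)⁻¹ = K6 u⁻¹ := by
    apply inv_eq_right_inv
    ext i j
    fin_cases i <;> fin_cases j <;>
      simp [K6, Matrix.mul_apply, Fin.sum_univ_four, hu, Matrix.vecHead, Matrix.vecTail]
  rw [hinv]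
  ext i j
  fin_cases i <;> fin_cases j <;>
    simp [RF, RV, K6, P4, Matrix.mul_apply, Fin.sum_univ_four, Matrix.vecHead,
      Matrix.vecTail] <;>
  · have h2 : 1 - q ^ 2 * (u ^ 2 * u ^ 2) ≠ 0 := by
      rw [show q ^ 2 * (u ^ 2 * u ^ 2) = q ^ 2 * u ^ 4 by ring]; exact h
    rw [← sub_eq_zero]
    field_simp
    ring
end

section
/- The twist F⁽³⁾(w) = Id₄ + (w(q−q⁻¹)/(1−w))·E_{12,21} (the 4×4 matrix equal to the identity except for entry w(q−q⁻¹)/(1−w) in position (12,21)) relates the face R-matrix of U_q(ŝl(2)) to the dynamical R-matrix of U_{q,λ}(ŝl(2)): R[U_{q,λ}](z;w) = F⁽³⁾₂₁(w) · R[U_q^F](z) · F⁽³⁾₁₂(w)⁻¹, where F⁽³⁾₂₁(w) = P F⁽³⁾(w) P. -/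
open Matrix

/-- The unnormalized dynamical R-matrix of `U_{q,λ}(sl2-hat)`. -/
def Rdyn {K : Type*} [Field K] (q z w : K) : Matrix (Fin 4) (Fin 4) K :=
  !![1, 0, 0, 0;
     0, q * (1 - z) / (1 - q ^ 2 * z),
        (1 - q ^ 2) * (1 - w * z) / ((1 - q ^ 2 * z) * (1 - w)), 0;
     0, (1 - q ^ 2) * (z - w) / ((1 - q ^ 2 * z) * (1 - w)),
        q * (1 - z) * (1 - w * q ^ 2) * (1 - w * q⁻¹ ^ 2) / ((1 - q ^ 2 * z) * (1 - w) ^ 2), 0;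
     0, 0, 0, 1]

/-- The twist `F⁽³⁾(w) = Id₄ + (w(q−q⁻¹)/(1−w))·E_{12,21}`. -/
def F3 {K : Type*} [Field K] (q w : K) : Matrix (Fin 4) (Fin 4) K :=
  !![1, 0, 0, 0;
     0, 1, w * (q - q⁻¹) / (1 - w), 0;
     0, 0, 1, 0;
     0, 0, 0, 1]

lemma one_fin_four' {K : Type*} [Field K] :
    (1 : Matrix (Fin 4) (Fin 4) K) =
      !![1,0,0,0; 0,1,0,0; 0,0,1,0; 0,0,0,1] := by
  ext i j
  fin_cases i <;> fin_cases j <;>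
    simp [Matrix.one_apply, Fin.ext_iff, Matrix.vecHead, Matrix.vecTail] <;> decide

set_option maxHeartbeats 2000000 in
/-- The twist `F⁽³⁾` relates the face R-matrix of `U_q(sl2-hat)` to the dynamical
R-matrix of `U_{q,λ}(sl2-hat)`:
`R[U_{q,λ}](z;w) = F⁽³⁾₂₁(w) · R[U_q^F](z) · F⁽³⁾₁₂(w)⁻¹`, `F⁽³⁾₂₁ = P F⁽³⁾ P`. -/
theorem stmt10 {K : Type*} [Field K] (q z w : K) (hq : q ≠ 0)
    (h1 : 1 - q ^ 2 * z ≠ 0) (h2 : 1 - w ≠ 0) :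
    Rdyn q z w = (P4 * F3 q w * P4) * RF q z * (F3 q w)⁻¹ := by
  have hFinv : (F3 q w)⁻¹ =
      !![1, 0, 0, 0;
         0, 1, -(w * (q - q⁻¹) / (1 - w)), 0;
         0, 0, 1, 0;
         0, 0, 0, 1] := by
    apply Matrix.inv_eq_right_inv
    show (F3 q w : Matrix (Fin 4) (Fin 4) K) * _ = 1
    rw [one_fin_four']
    ext i j
    fin_cases i <;> fin_cases j <;>
      · simp [F3, Matrix.mul_apply, Fin.sum_univ_four, Matrix.vecHead, Matrix.vecTail]
        try ring
  have hB : q * (1 - w) * (1 - q ^ 2 * z) * (1 - q ^ 2 * z) * (q * (1 - w)) ≠ 0 :=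
    mul_ne_zero (mul_ne_zero (mul_ne_zero (mul_ne_zero hq h2) h1) h1) (mul_ne_zero hq h2)
  have hB' : q * (1 - w) * (1 - q ^ 2 * z) * (1 - q ^ 2 * z) ≠ 0 :=
    mul_ne_zero (mul_ne_zero (mul_ne_zero hq h2) h1) h1
  rw [hFinv]
  ext i j
  fin_cases i <;> fin_cases j <;>
    · simp [Rdyn, RF, F3, P4, Matrix.mul_apply, Fin.sum_univ_four,
        Matrix.vecHead, Matrix.vecTail]
      try field_simp
      try rw [eq_div_iff (mul_ne_zero hB hB')]
      try ring
end

section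
/- The twist F⁽⁴⁾(s) = Id₄ − s⁻¹·E_{12,21} relates the double Yangian R-matrix to the dynamical double Yangian R-matrix: R[DY_s](β) = F⁽⁴⁾₂₁(s) · R[DY](β) · F⁽⁴⁾₁₂(s)⁻¹, where R[DY](β) has entries 1,β/(β+1),1/(β+1) as in the standard Yang R-matrix and R[DY_s](β) has entries 1 at corners, β/(β+1) at (12,12), (s+β)/(s(β+1)) at (12,21), (s−β)/(s(β+1)) at (21,12), and ((s²−1)/s²)β/(β+1) at (21,21). (Here iβ/π→β, πs→s after rescaling.) -/
open Matrix
set_option maxHeartbeats 1000000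

/-- The unnormalized double Yangian R-matrix (standard Yang R-matrix, `iβ/π → β`). -/
def RDY {K : Type*} [Field K] (b : K) : Matrix (Fin 4) (Fin 4) K :=
  !![1, 0, 0, 0;
     0, b / (b + 1), 1 / (b + 1), 0;
     0, 1 / (b + 1), b / (b + 1), 0;
     0, 0, 0, 1]

/-- The unnormalized dynamical double Yangian R-matrix (`iβ/π → β`, `πs → s`). -/
def RDYs {K : Type*} [Field K] (b s : K) : Matrix (Fin 4) (Fin 4) K :=
  !![1, 0, 0, 0;
     0, b / (b + 1), (s + b) / (s * (b + 1)), 0;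
     0, (s - b) / (s * (b + 1)), ((s ^ 2 - 1) / s ^ 2) * (b / (b + 1)), 0;
     0, 0, 0, 1]

/-- The twist `F⁽⁴⁾(s) = Id₄ − s⁻¹·E_{12,21}`. -/
def F4 {K : Type*} [Field K] (s : K) : Matrix (Fin 4) (Fin 4) K :=
  !![1, 0, 0, 0;
     0, 1, -s⁻¹, 0;
     0, 0, 1, 0;
     0, 0, 0, 1]

lemma F4_inv {K : Type*} [Field K] (s : K) :
    (F4 s)⁻¹ = !![1, 0, 0, 0; 0, 1, s⁻¹, 0; 0, 0, 1, 0; (0:K), 0, 0, 1] := by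
  apply inv_eq_right_inv
  ext i j
  fin_cases i <;> fin_cases j <;>
    simp [F4, Matrix.mul_apply, Fin.sum_univ_four, Matrix.one_apply,
      Matrix.vecHead, Matrix.vecTail]

/-- The twist `F⁽⁴⁾` relates the double Yangian R-matrix to the dynamical double
Yangian R-matrix: `R[DY_s](β) = F⁽⁴⁾₂₁(s) · R[DY](β) · F⁽⁴⁾₁₂(s)⁻¹`. -/
theorem stmt11 {K : Type*} [Field K] (b s : K) (h1 : b + 1 ≠ 0) (hs : s ≠ 0) :
    RDYs b s = (P4 * F4 s * P4) * RDY b * (F4 s)⁻¹ := by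
  rw [F4_inv]
  ext i j
  fin_cases i <;> fin_cases j <;>
    simp [RDYs, RDY, P4, F4, Matrix.mul_apply, Fin.sum_univ_four,
      Matrix.vecHead, Matrix.vecTail]
  · field_simp
    ring
  · field_simp
    ring
  · simp only [div_eq_mul_inv, pow_two, _root_.mul_inv_rev]
    linear_combination (b * (b + 1)⁻¹ * (s * s⁻¹ + 1)) * mul_inv_cancel₀ hs
end

section
/- The homothetical twist H⁽³⁾(β) with entries H[11,11]=H[22,22]=1, H[12,12]=H[21,21]=(π−iβ(1+ε))/(2(π−iβ)), H[12,21]=H[21,12]=(π−iβ(1−ε))/(2(π−iβ)), satisfies: H⁽³⁾₂₁(−β)·H⁽³⁾₁₂(β)⁻¹ is a scalar multiple of the double Yangian R-matrix R[DY](β); precisely, there exists a nonzero rational function f(β) (independent of the matrix indices) such that R[DY](β) = f(β)·H⁽³⁾₂₁(−β)·H⁽³⁾₁₂(β)⁻¹, for any fixed ε ≠ 0. -/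
open Matrix

/-- The homothetical twist `H⁽³⁾(β)` (with `π` set to `1` and `iβ → b`), depending on the
arbitrary nonzero parameter `e = ε`. -/
def H3 {K : Type*} [Field K] (b e : K) : Matrix (Fin 4) (Fin 4) K :=
  !![1, 0, 0, 0;
     0, (1 - b * (1 + e)) / (2 * (1 - b)), (1 - b * (1 - e)) / (2 * (1 - b)), 0;
     0, (1 - b * (1 - e)) / (2 * (1 - b)), (1 - b * (1 + e)) / (2 * (1 - b)), 0;
     0, 0, 0, 1]

set_option maxHeartbeats 2000000 in
/-- `H⁽³⁾₂₁(−β)·H⁽³⁾₁₂(β)⁻¹` is a nonzero scalar multiple of the double Yangian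
R-matrix: there is `f(β) ≠ 0` with `R[DY](β) = f(β)·H⁽³⁾₂₁(−β)·H⁽³⁾₁₂(β)⁻¹`. -/
theorem stmt13 {K : Type*} [Field K] (b e : K) (he : e ≠ 0) (hb : b ≠ 0)
    (h2 : (2 : K) ≠ 0) (hm : 1 - b ≠ 0) (hp : 1 + b ≠ 0) :
    ∃ f : K, f ≠ 0 ∧ RDY b = f • ((P4 * H3 (-b) e * P4) * (H3 b e)⁻¹) := by
  refine ⟨1, one_ne_zero, ?_⟩
  have hP : P4 * H3 (-b) e * P4 = H3 (-b) e := by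
    ext i j
    fin_cases i <;> fin_cases j <;>
      simp [P4, H3, Matrix.mul_apply, Fin.sum_univ_four, Matrix.vecHead, Matrix.vecTail]
  have hinv : (H3 b e)⁻¹ =
      !![1, 0, 0, 0;
         0, -(1 - b * (1 + e)) / (2 * b * e), (1 - b * (1 - e)) / (2 * b * e), 0;
         0, (1 - b * (1 - e)) / (2 * b * e), -(1 - b * (1 + e)) / (2 * b * e), 0;
         0, 0, 0, 1] := by
    apply Matrix.inv_eq_right_inv
    ext i j
    fin_cases i <;> fin_cases j <;>
      simp [H3, Matrix.mul_apply, Fin.sum_univ_four, Matrix.vecHead, Matrix.vecTail] <;>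
      (try field_simp [he, hb, hp, hm]) <;> ring
  rw [one_smul, hP, hinv]
  ext i j
  fin_cases i <;> fin_cases j <;>
    simp [RDY, H3, Matrix.mul_apply, Fin.sum_univ_four, Matrix.vecHead, Matrix.vecTail] <;>
    (try field_simp [he, hb, hp, hm]) <;> (try ring)
  all_goals field_simp
  all_goals ring
end

section
/- The evaluated universal twist F(s) = Id₄ − s⁻¹·E_{12,21} of U_s(sl(2)) satisfies the (evaluated) shifted cocycle condition: F₁₂(s)·(Δ⊗id)(F)(s) = F₂₃(s+h⁽¹⁾)·(id⊗Δ)(F)(s), as 8×8 matrices on (K²)^{⊗3}, where Δ is the cocommutative coproduct of U(sl(2)) evaluated in spin-1/2, and F₂₃(s+h⁽¹⁾) acts on v_ε⊗u₂⊗u₃ as 1⊗F(s+ε). -/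
open Matrix

/-- Triple Kronecker product of 2×2 matrices as an 8×8 matrix, lexicographic basis
ordering of `V⊗V⊗V`. -/
def kron3 {K : Type*} [Field K] (A B C : Matrix (Fin 2) (Fin 2) K) :
    Matrix (Fin 8) (Fin 8) K :=
  Matrix.of fun i j =>
    A ⟨i.val / 4, by have := i.isLt; omega⟩ ⟨j.val / 4, by have := j.isLt; omega⟩ *
    B ⟨i.val / 2 % 2, by omega⟩ ⟨j.val / 2 % 2, by omega⟩ *
    C ⟨i.val % 2, by omega⟩ ⟨j.val % 2, by omega⟩

/-- `e` in the spin-1/2 representation. -/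
def e2 {K : Type*} [Field K] : Matrix (Fin 2) (Fin 2) K := !![0, 1; 0, 0]

/-- `f` in the spin-1/2 representation. -/
def f2 {K : Type*} [Field K] : Matrix (Fin 2) (Fin 2) K := !![0, 0; 1, 0]

/-- `h` in the spin-1/2 representation. -/
def h2 {K : Type*} [Field K] : Matrix (Fin 2) (Fin 2) K := !![1, 0; 0, -1]

/-- The evaluated universal twist `F(s) = Id₄ − s⁻¹·E_{12,21}` of `U_s(sl(2))`. -/
def F4mat {K : Type*} [Field K] (s : K) : Matrix (Fin 4) (Fin 4) K :=
  !![1, 0, 0, 0;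
     0, 1, -s⁻¹, 0;
     0, 0, 1, 0;
     0, 0, 0, 1]

/-- `F₁₂`: a 4×4 matrix acting on tensor slots 1,2 of `V⊗V⊗V`. -/
def lift12 {K : Type*} [Field K] (M : Matrix (Fin 4) (Fin 4) K) :
    Matrix (Fin 8) (Fin 8) K :=
  Matrix.of fun i j =>
    M ⟨i.val / 2, by have := i.isLt; omega⟩ ⟨j.val / 2, by have := j.isLt; omega⟩ *
      (if i.val % 2 = j.val % 2 then 1 else 0)

/-- `F₂₃(s+h⁽¹⁾)`: the family `F` acts on slots 2,3 with parameter shifted by the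
weight (`+1` for basis index 0, `−1` for index 1) of the vector in slot 1. -/
def lift23sh {K : Type*} [Field K] (F : K → Matrix (Fin 4) (Fin 4) K) (s : K) :
    Matrix (Fin 8) (Fin 8) K :=
  Matrix.of fun i j =>
    (if i.val / 4 = j.val / 4 then 1 else 0) *
      F (s + (if i.val / 4 = 0 then 1 else -1))
        ⟨i.val % 4, by omega⟩ ⟨j.val % 4, by omega⟩

/-- The coefficient matrix `∏_{k=0}^{n−1}[(1+k−s)·1 − H]` on `V⊗V⊗V`. -/
def coefMat3 {K : Type*} [Field K] (s : K) (H : Matrix (Fin 8) (Fin 8) K) (n : ℕ) :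
    Matrix (Fin 8) (Fin 8) K :=
  (((List.range n).map
      (fun k : ℕ => ((1 + (k : K) - s) • (1 : Matrix (Fin 8) (Fin 8) K)) - H)).prod)

/-- `(Δ⊗id)F(s)` evaluated in `π^{⊗3}`: the `h`-dependent coefficient uses
`h⁽¹⁾+h⁽²⁾` and `(Δ⊗id)(eⁿ⊗fⁿ) = (e⊗1+1⊗e)ⁿ⊗fⁿ`; the series truncates (`n ≤ 2`). -/
noncomputable def DeltaF {K : Type*} [Field K] (s : K) : Matrix (Fin 8) (Fin 8) K :=
  ∑ n ∈ Finset.range 3, (n.factorial : K)⁻¹ •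
    ((coefMat3 s (kron3 h2 1 1 + kron3 1 h2 1) n)⁻¹ *
      ((kron3 e2 1 1 + kron3 1 e2 1) ^ n * (kron3 1 1 f2) ^ n))

/-- `(id⊗Δ)F(s)` evaluated in `π^{⊗3}`. -/
noncomputable def idDeltaF {K : Type*} [Field K] (s : K) : Matrix (Fin 8) (Fin 8) K :=
  ∑ n ∈ Finset.range 3, (n.factorial : K)⁻¹ •
    ((coefMat3 s (kron3 h2 1 1) n)⁻¹ *
      ((kron3 e2 1 1) ^ n * (kron3 1 f2 1 + kron3 1 1 f2) ^ n))

section AuxCocycle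
variable {K : Type*} [Field K]

/-- Convenient `Fin`-value reductions. -/
lemma fin4_mk2 (h : 2 < 4) : (⟨2, h⟩ : Fin 4) = 2 := rfl
lemma fin4_mk3 (h : 3 < 4) : (⟨3, h⟩ : Fin 4) = 3 := rfl

lemma coefMat3_zero (s : K) (H : Matrix (Fin 8) (Fin 8) K) : coefMat3 s H 0 = 1 := by
  simp [coefMat3]

lemma coefMat3_one (s : K) (H : Matrix (Fin 8) (Fin 8) K) :
    coefMat3 s H 1 = ((1 - s) • (1 : Matrix (Fin 8) (Fin 8) K)) - H := by
  simp [coefMat3, List.range_succ]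

set_option maxHeartbeats 2000000 in
lemma f3_sq : ((kron3 1 1 f2 : Matrix (Fin 8) (Fin 8) K)) ^ 2 = 0 := by
  rw [pow_two]
  ext i j
  simp only [Matrix.mul_apply, Fin.sum_univ_eight]
  fin_cases i <;> fin_cases j <;>
    simp [kron3, f2, Matrix.one_apply, Fin.mk_zero, Fin.mk_one,
      show ((0:Fin 8):ℕ) = 0 from rfl, show ((1:Fin 8):ℕ) = 1 from rfl,
      show ((2:Fin 8):ℕ) = 2 from rfl, show ((3:Fin 8):ℕ) = 3 from rfl,
      show ((4:Fin 8):ℕ) = 4 from rfl, show ((5:Fin 8):ℕ) = 5 from rfl,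
      show ((6:Fin 8):ℕ) = 6 from rfl, show ((7:Fin 8):ℕ) = 7 from rfl]

set_option maxHeartbeats 2000000 in
lemma e1_sq : ((kron3 e2 1 1 : Matrix (Fin 8) (Fin 8) K)) ^ 2 = 0 := by
  rw [pow_two]
  ext i j
  simp only [Matrix.mul_apply, Fin.sum_univ_eight]
  fin_cases i <;> fin_cases j <;>
    simp [kron3, e2, Matrix.one_apply, Fin.mk_zero, Fin.mk_one,
      show ((0:Fin 8):ℕ) = 0 from rfl, show ((1:Fin 8):ℕ) = 1 from rfl,
      show ((2:Fin 8):ℕ) = 2 from rfl, show ((3:Fin 8):ℕ) = 3 from rfl,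
      show ((4:Fin 8):ℕ) = 4 from rfl, show ((5:Fin 8):ℕ) = 5 from rfl,
      show ((6:Fin 8):ℕ) = 6 from rfl, show ((7:Fin 8):ℕ) = 7 from rfl]

/-- diagonal inverse of the `n=1` coefficient matrix for `(Δ⊗id)F`. -/
noncomputable def D1 (s : K) : Matrix (Fin 8) (Fin 8) K :=
  Matrix.diagonal fun i =>
    if i.val < 2 then (-1-s)⁻¹ else if i.val < 6 then (1-s)⁻¹ else (3-s)⁻¹

/-- diagonal inverse of the `n=1` coefficient matrix for `(id⊗Δ)F`. -/
noncomputable def D2 (s : K) : Matrix (Fin 8) (Fin 8) K :=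
  Matrix.diagonal fun i => if i.val < 4 then (-s)⁻¹ else (2-s)⁻¹

set_option maxHeartbeats 2000000 in
lemma inv1 (s : K) (h1 : s - 1 ≠ 0) (h2' : s + 1 ≠ 0) (h4 : s - 3 ≠ 0) :
    (coefMat3 s (kron3 h2 1 1 + kron3 1 h2 1) 1)⁻¹ = D1 s := by
  apply Matrix.inv_eq_right_inv
  rw [coefMat3_one]
  have ha : (-1 - s : K) ≠ 0 := fun h => h2' (by linear_combination -h)
  have hb : (1 - s : K) ≠ 0 := fun h => h1 (by linear_combination -h)
  have hc : (3 - s : K) ≠ 0 := fun h => h4 (by linear_combination -h)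
  ext i j
  simp only [Matrix.mul_apply, Matrix.sub_apply, Matrix.add_apply, Matrix.smul_apply,
    Fin.sum_univ_eight]
  fin_cases i <;> fin_cases j <;>
    simp [D1, kron3, h2, Matrix.one_apply, Matrix.diagonal, Fin.mk_zero, Fin.mk_one,
      show ((0:Fin 8):ℕ) = 0 from rfl, show ((1:Fin 8):ℕ) = 1 from rfl,
      show ((2:Fin 8):ℕ) = 2 from rfl, show ((3:Fin 8):ℕ) = 3 from rfl,
      show ((4:Fin 8):ℕ) = 4 from rfl, show ((5:Fin 8):ℕ) = 5 from rfl,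
      show ((6:Fin 8):ℕ) = 6 from rfl, show ((7:Fin 8):ℕ) = 7 from rfl] <;>
    (try field_simp) <;> (try ring)

set_option maxHeartbeats 2000000 in
lemma inv2 (s : K) (h0 : s ≠ 0) (h3 : s - 2 ≠ 0) :
    (coefMat3 s (kron3 h2 1 1) 1)⁻¹ = D2 s := by
  apply Matrix.inv_eq_right_inv
  rw [coefMat3_one]
  have ha : (-s : K) ≠ 0 := neg_ne_zero.mpr h0
  have hb : (2 - s : K) ≠ 0 := fun h => h3 (by linear_combination -h)
  ext i j
  simp only [Matrix.mul_apply, Matrix.sub_apply, Matrix.add_apply, Matrix.smul_apply,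
    Fin.sum_univ_eight]
  fin_cases i <;> fin_cases j <;>
    simp [D2, kron3, h2, Matrix.one_apply, Matrix.diagonal, Fin.mk_zero, Fin.mk_one,
      show ((0:Fin 8):ℕ) = 0 from rfl, show ((1:Fin 8):ℕ) = 1 from rfl,
      show ((2:Fin 8):ℕ) = 2 from rfl, show ((3:Fin 8):ℕ) = 3 from rfl,
      show ((4:Fin 8):ℕ) = 4 from rfl, show ((5:Fin 8):ℕ) = 5 from rfl,
      show ((6:Fin 8):ℕ) = 6 from rfl, show ((7:Fin 8):ℕ) = 7 from rfl] <;>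
    (try field_simp) <;> (try ring)

/-- explicit value of `(Δ⊗id)F(s)`. -/
noncomputable def MD (s : K) : Matrix (Fin 8) (Fin 8) K :=
  Matrix.of fun i j =>
    if i = j then 1
    else if i = 1 ∧ (j = 2 ∨ j = 4) then -(s+1)⁻¹
    else if (i = 3 ∨ i = 5) ∧ j = 6 then -(s-1)⁻¹
    else 0

/-- explicit value of `(id⊗Δ)F(s)`. -/
noncomputable def MI (s : K) : Matrix (Fin 8) (Fin 8) K :=
  Matrix.of fun i j =>
    if i = j then 1
    else if (i = 1 ∨ i = 2) ∧ j = 4 then -s⁻¹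
    else if i = 3 ∧ (j = 5 ∨ j = 6) then -s⁻¹
    else 0

set_option maxHeartbeats 2000000 in
lemma oneD1EF (s : K) (h1 : s - 1 ≠ 0) (h2' : s + 1 ≠ 0) :
    (1 : Matrix (Fin 8) (Fin 8) K) +
      D1 s * ((kron3 e2 1 1 + kron3 1 e2 1) * kron3 1 1 f2) = MD s := by
  have ha : (-1 - s : K) ≠ 0 := fun h => h2' (by linear_combination -h)
  have hb : (1 - s : K) ≠ 0 := fun h => h1 (by linear_combination -h)
  ext i j
  simp only [Matrix.add_apply, D1, Matrix.diagonal_mul, Matrix.mul_apply,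
    Fin.sum_univ_eight]
  fin_cases i <;> fin_cases j <;>
    simp [MD, kron3, e2, f2, Matrix.one_apply, Matrix.add_apply, Fin.mk_zero, Fin.mk_one,
      show ((0:Fin 8):ℕ) = 0 from rfl, show ((1:Fin 8):ℕ) = 1 from rfl,
      show ((2:Fin 8):ℕ) = 2 from rfl, show ((3:Fin 8):ℕ) = 3 from rfl,
      show ((4:Fin 8):ℕ) = 4 from rfl, show ((5:Fin 8):ℕ) = 5 from rfl,
      show ((6:Fin 8):ℕ) = 6 from rfl, show ((7:Fin 8):ℕ) = 7 from rfl] <;>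
    (try field_simp) <;> (try ring)

set_option maxHeartbeats 2000000 in
lemma oneD2EF (s : K) (h0 : s ≠ 0) (h3 : s - 2 ≠ 0) :
    (1 : Matrix (Fin 8) (Fin 8) K) +
      D2 s * (kron3 e2 1 1 * (kron3 1 f2 1 + kron3 1 1 f2)) = MI s := by
  have ha : (-s : K) ≠ 0 := neg_ne_zero.mpr h0
  have hb : (2 - s : K) ≠ 0 := fun h => h3 (by linear_combination -h)
  ext i j
  simp only [Matrix.add_apply, D2, Matrix.diagonal_mul, Matrix.mul_apply,
    Fin.sum_univ_eight]
  fin_cases i <;> fin_cases j <;>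
    simp [MI, kron3, e2, f2, Matrix.one_apply, Matrix.add_apply, Fin.mk_zero, Fin.mk_one,
      show ((0:Fin 8):ℕ) = 0 from rfl, show ((1:Fin 8):ℕ) = 1 from rfl,
      show ((2:Fin 8):ℕ) = 2 from rfl, show ((3:Fin 8):ℕ) = 3 from rfl,
      show ((4:Fin 8):ℕ) = 4 from rfl, show ((5:Fin 8):ℕ) = 5 from rfl,
      show ((6:Fin 8):ℕ) = 6 from rfl, show ((7:Fin 8):ℕ) = 7 from rfl] <;>
    (try field_simp) <;> (try ring)

lemma matinv_one : (1 : Matrix (Fin 8) (Fin 8) K)⁻¹ = 1 :=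
  Matrix.inv_eq_right_inv (one_mul 1)

set_option maxHeartbeats 1000000 in
lemma DeltaF_eq (s : K) (h1 : s - 1 ≠ 0) (h2' : s + 1 ≠ 0) (h4 : s - 3 ≠ 0) :
    DeltaF s = MD s := by
  rw [DeltaF, Finset.sum_range_succ, Finset.sum_range_succ, Finset.sum_range_one,
    coefMat3_zero, f3_sq, inv1 s h1 h2' h4, matinv_one]
  simp only [inv_one, pow_zero, pow_one, mul_one, one_mul, mul_zero, smul_zero,
    add_zero, Nat.factorial_zero, Nat.factorial_one, Nat.cast_one, one_smul]
  exact oneD1EF s h1 h2'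

set_option maxHeartbeats 1000000 in
lemma idDeltaF_eq (s : K) (h0 : s ≠ 0) (h3 : s - 2 ≠ 0) :
    idDeltaF s = MI s := by
  rw [idDeltaF, Finset.sum_range_succ, Finset.sum_range_succ, Finset.sum_range_one,
    coefMat3_zero, e1_sq, inv2 s h0 h3, matinv_one]
  simp only [inv_one, pow_zero, pow_one, mul_one, one_mul, zero_mul, mul_zero,
    smul_zero, add_zero, Nat.factorial_zero, Nat.factorial_one, Nat.cast_one, one_smul]
  exact oneD2EF s h0 h3

set_option maxHeartbeats 2000000 in
lemma main_mul (s : K) (h0 : s ≠ 0) (h1 : s - 1 ≠ 0) (h2' : s + 1 ≠ 0) :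
    lift12 (F4mat s) * MD s = lift23sh F4mat s * MI s := by
  have ha : (s + 1 : K) ≠ 0 := h2'
  have hb : (s - 1 : K) ≠ 0 := h1
  ext i j
  simp only [Matrix.mul_apply, Fin.sum_univ_eight]
  fin_cases i <;> fin_cases j <;>
    simp [lift12, lift23sh, F4mat, MD, MI, fin4_mk2, fin4_mk3,
      Matrix.cons_val_two, Matrix.cons_val_three, Matrix.vecHead, Matrix.vecTail,
      Fin.mk_zero, Fin.mk_one,
      show ((0:Fin 8):ℕ) = 0 from rfl, show ((1:Fin 8):ℕ) = 1 from rfl,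
      show ((2:Fin 8):ℕ) = 2 from rfl, show ((3:Fin 8):ℕ) = 3 from rfl,
      show ((4:Fin 8):ℕ) = 4 from rfl, show ((5:Fin 8):ℕ) = 5 from rfl,
      show ((6:Fin 8):ℕ) = 6 from rfl, show ((7:Fin 8):ℕ) = 7 from rfl] <;>
    (try field_simp) <;> (try ring)

end AuxCocycle

/-- The evaluated shifted cocycle condition for the twist of `U_s(sl(2))`:
`F₁₂(s)·(Δ⊗id)F(s) = F₂₃(s+h⁽¹⁾)·(id⊗Δ)F(s)` as 8×8 matrices. -/
theorem stmt16 {K : Type*} [Field K] (s : K)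
    (h0 : s ≠ 0) (h1 : s - 1 ≠ 0) (h2' : s + 1 ≠ 0)
    (h3 : s - 2 ≠ 0) (h4 : s - 3 ≠ 0) :
    lift12 (F4mat s) * DeltaF s = lift23sh F4mat s * idDeltaF s := by
  rw [DeltaF_eq s h1 h2' h4, idDeltaF_eq s h0 h3]
  exact main_mul s h0 h1 h2'
end

section
/- Conjugation by the twist F⁽ⁱⁱ⁾(s) = Id₄ − s⁻¹E_{12,21} with dynamical shift produces the R-matrix of U_s(sl(2)) from the trivial R-matrix: F⁽ⁱⁱ⁾₂₁(s)·Id₄·F⁽ⁱⁱ⁾₁₂(s)⁻¹ = R[U_s(sl(2))], i.e., P F(s) P · F(s)⁻¹ equals the matrix with entries 1 at (11,11),(22,22),(12,12); s⁻¹ at (12,21); −s⁻¹ at (21,12); 1−s⁻² at (21,21). -/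
open Matrix

/-- The twist `F⁽ⁱⁱ⁾(s) = Id₄ − s⁻¹·E_{12,21}`. -/
def Fii {K : Type*} [Field K] (s : K) : Matrix (Fin 4) (Fin 4) K :=
  !![1, 0, 0, 0;
     0, 1, -s⁻¹, 0;
     0, 0, 1, 0;
     0, 0, 0, 1]

/-- Conjugation by the twist `F⁽ⁱⁱ⁾(s)` produces the R-matrix of `U_s(sl(2))` from the
trivial R-matrix: `F⁽ⁱⁱ⁾₂₁(s)·Id₄·F⁽ⁱⁱ⁾₁₂(s)⁻¹ = R[U_s(sl(2))]`. -/
theorem stmt17 {K : Type*} [Field K] (s : K) (hs : s ≠ 0) :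
    (P4 * Fii s * P4) * (1 : Matrix (Fin 4) (Fin 4) K) * (Fii s)⁻¹ = RUs s := by
  have hinv : (Fii s)⁻¹ = !![1, 0, 0, 0; 0, 1, s⁻¹, 0; 0, 0, 1, 0; 0, 0, 0, (1:K)] := by
    apply Matrix.inv_eq_right_inv
    simp [Fii]
    ext i j
    fin_cases i <;> fin_cases j <;> simp [Matrix.one_apply, Matrix.vecHead, Matrix.vecTail]
  rw [hinv]
  simp [P4, Fii, RUs]
  ring_nf
end
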